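/- Every idempotent e in P_n is S_n-conjugate to a standard idempotent, i.e., there is a permutation matrix σ with σ e σ^{-1} = c^{(β_1)} ⊕ ... ⊕ c^{(β_r)} ⊕ 0_m where β_1 ≥ ... ≥ β_r ≥ 1 and m + Σβ_i = n. -/

import Mathlib

/-! The image of an idempotent partial map `e` consists of fixed points, so the fibres
`e⁻¹(f)` over the fixed points `f`, together with the set where `e` is undefined, partition the
ground set. Listing every fibre with its fixed point first, the fibres by decreasing size, and
the undefined points last enumerates the ground set; relabelling by this enumeration turns `e`
into the standard idempotent. -/

/-- Composition of partial transformations on `{1,…,n}`: `pcomp f g = f ∘ g`. -/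
def pcomp {n : ℕ} (f g : Fin n → Option (Fin n)) : Fin n → Option (Fin n) :=
  fun x => (g x).bind f

/-- Conjugation action of `S_n` on partial transformations: `(g • e)(x) = g(e(g⁻¹ x))`. -/
def pconj {n : ℕ} (g : Equiv.Perm (Fin n)) (e : Fin n → Option (Fin n)) :
    Fin n → Option (Fin n) :=
  fun x => Option.map g (e (g⁻¹ x))

/-- Partial sums of block sizes: `S β i = β 0 + ⋯ + β (i-1)`. -/
def blockSum (β : ℕ → ℕ) (i : ℕ) : ℕ := ∑ j ∈ Finset.range i, β j

namespace List

variable {α : Type*}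

theorem getElem?_flatten_append_length_take_add (L : List (List α)) (U : List α) {i k : ℕ}
    (hi : i < L.length) (hk : k < L[i].length) :
    (L.flatten ++ U)[(L.take i).flatten.length + k]? = some L[i][k] := by
  have hsplit : L.flatten = (L.take i).flatten ++ (L[i] ++ (L.drop (i + 1)).flatten) := by
    rw [← flatten_cons, getElem_cons_drop, ← flatten_append, take_append_drop]
  rw [hsplit, append_assoc, getElem?_append_right (by omega), Nat.add_sub_cancel_left,
    append_assoc, getElem?_append_left hk, getElem?_eq_getElem hk]

theorem Nodup.exists_perm_getElem?_eq {n : ℕ} {L : List (Fin n)} (hnodup : L.Nodup)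
    (hmem : ∀ x, x ∈ L) :
    L.length = n ∧ ∃ τ : Equiv.Perm (Fin n), ∀ x : Fin n, L[(x : ℕ)]? = some (τ x) := by
  have hlen : L.length = n := by
    simpa using Fintype.card_congr (hnodup.getEquivOfForallMemList _ hmem)
  exact ⟨hlen, (finCongr hlen.symm).trans (hnodup.getEquivOfForallMemList _ hmem),
    fun x => by simp⟩

end List

theorem blockSum_getD_map_length {α : Type*} (L : List (List α)) (i : ℕ) :
    blockSum (fun j => (L.map List.length).getD j 0) i = (L.take i).flatten.length := by
  induction i with
  | zero => simp [blockSum]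
  | succ i ih =>
    rw [blockSum, Finset.sum_range_succ, ← blockSum, ih, List.take_add_one]
    rcases lt_or_ge i L.length with hi | hi <;> simp [hi]

theorem exists_perm_pconj_standard_of_blocks {n : ℕ} (e : Fin n → Option (Fin n))
    (J : List (List (Fin n))) (U : List (Fin n)) (hnodup : (J.flatten ++ U).Nodup)
    (hmem : ∀ x, x ∈ J.flatten ++ U) (hsorted : J.Pairwise fun a b => b.length ≤ a.length)
    (hne : [] ∉ J) (hblock : ∀ b ∈ J, ∀ z ∈ b, e z = b.head?)
    (hU : ∀ z ∈ U, e z = none) :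
    ∃ (σ : Equiv.Perm (Fin n)) (r : ℕ) (β : ℕ → ℕ) (m : ℕ),
      (∀ i < r, 1 ≤ β i) ∧
      (∀ i j, i ≤ j → j < r → β j ≤ β i) ∧
      m + blockSum β r = n ∧
      (∀ i < r, ∀ x : Fin n, blockSum β i ≤ (x : ℕ) → (x : ℕ) < blockSum β (i + 1) →
        ∃ y : Fin n, (y : ℕ) = blockSum β i ∧ pconj σ e x = some y) ∧
      (∀ x : Fin n, blockSum β r ≤ (x : ℕ) → pconj σ e x = none) := by
  obtain ⟨hlen, τ, hτ⟩ := hnodup.exists_perm_getElem?_eq hmem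
  have hpconj : ∀ x, pconj τ.symm e x = (e (τ x)).map τ.symm := fun _ => rfl
  set β := fun j => (J.map List.length).getD j 0
  have hβ : ∀ i (hi : i < J.length), β i = J[i].length := fun i hi => by simp [β, hi]
  have hS := blockSum_getD_map_length J
  have hpos : ∀ i (hi : i < J.length), 0 < J[i].length := fun i hi =>
    List.length_pos_iff.mpr fun h => hne (h ▸ List.getElem_mem hi)
  have hτ_block : ∀ i (hi : i < J.length) k (hk : k < J[i].length) (x : Fin n),
      (x : ℕ) = blockSum β i + k → τ x = J[i][k] := fun i hi k hk x hx => by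
    have h := J.getElem?_flatten_append_length_take_add U hi hk
    rw [← hS, ← hx, hτ x] at h
    exact Option.some.inj h
  refine ⟨τ.symm, J.length, β, U.length, fun i hi => hβ i hi ▸ hpos i hi, ?_, ?_, ?_, ?_⟩
  · intro i j hij hj
    rcases hij.lt_or_eq with hij | rfl
    · rw [hβ i (hij.trans hj), hβ j hj]
      exact List.pairwise_iff_getElem.mp hsorted i j _ _ hij
    · rfl
  · rw [hS, List.take_of_length_le le_rfl]
    rw [List.length_append] at hlen
    omega
  · intro i hi x hx₁ hx₂
    have hS_succ : blockSum β (i + 1) = blockSum β i + J[i].length := by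
      rw [blockSum, Finset.sum_range_succ, ← blockSum, hβ i hi]
    let y : Fin n := ⟨blockSum β i, hx₁.trans_lt x.2⟩
    have hy : τ y = J[i][0] := hτ_block i hi 0 (hpos i hi) y rfl
    have hx : τ x = J[i][x - blockSum β i] := hτ_block i hi _ (by omega) x (by omega)
    refine ⟨y, rfl, ?_⟩
    rw [hpconj, hx, hblock _ (J.getElem_mem hi) _ (List.getElem_mem _), List.head?_eq_getElem?,
      List.getElem?_eq_getElem (hpos i hi), Option.map_some, ← hy, Equiv.symm_apply_apply]
  · intro x hx
    rw [hS, List.take_of_length_le le_rfl] at hx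
    have hτx := hτ x
    rw [List.getElem?_append_right hx] at hτx
    rw [hpconj, hU _ (List.mem_of_getElem? hτx), Option.map_none]

section Idempotent

open Finset

variable {α : Type*} [Fintype α] (e : α → Option α)

noncomputable def undefinedList : List α := (univ.filter fun x => e x = none).toList

theorem mem_undefinedList {e} {z : α} : z ∈ undefinedList e ↔ e z = none := by
  simp [undefinedList]

variable [DecidableEq α]

def fixedPoints : Finset α := univ.filter fun f => e f = some f

noncomputable def blockList (f : α) : List α :=
  f :: (univ.filter fun x => e x = some f ∧ x ≠ f).toList

noncomputable def sortedBlocks : List (List α) :=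
  ((fixedPoints e).toList.map (blockList e)).mergeSort fun a b => b.length ≤ a.length

variable {e}

theorem mem_fixedPoints {f : α} : f ∈ fixedPoints e ↔ e f = some f := by
  simp [fixedPoints]

theorem mem_blockList {f z : α} (hf : f ∈ fixedPoints e) :
    z ∈ blockList e f ↔ e z = some f := by
  rw [mem_fixedPoints] at hf
  by_cases hz : z = f <;> simp [blockList, hz, hf]

theorem nodup_blockList (f : α) : (blockList e f).Nodup := by
  simp [blockList, nodup_toList]

theorem sortedBlocks_perm :
    (sortedBlocks e).Perm ((fixedPoints e).toList.map (blockList e)) :=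
  List.mergeSort_perm _ _

theorem pairwise_sortedBlocks : (sortedBlocks e).Pairwise fun a b => b.length ≤ a.length := by
  refine (List.pairwise_mergeSort (fun a b c hab hbc => ?_) (fun a b => ?_) _).imp (by simp)
  · simp only [decide_eq_true_eq] at hab hbc ⊢
    omega
  · simpa using le_total _ _

theorem exists_eq_blockList_of_mem_sortedBlocks {b : List α} (hb : b ∈ sortedBlocks e) :
    ∃ f ∈ fixedPoints e, b = blockList e f := by
  obtain ⟨f, hf, rfl⟩ := List.mem_map.mp (sortedBlocks_perm.mem_iff.mp hb)
  exact ⟨f, mem_toList.mp hf, rfl⟩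

theorem nil_notMem_sortedBlocks : [] ∉ sortedBlocks e := fun h => by
  obtain ⟨f, -, hf⟩ := exists_eq_blockList_of_mem_sortedBlocks h
  exact List.cons_ne_nil _ _ hf.symm

theorem apply_eq_head?_of_mem_sortedBlocks {b : List α} (hb : b ∈ sortedBlocks e) {z : α}
    (hz : z ∈ b) : e z = b.head? := by
  obtain ⟨f, hf, rfl⟩ := exists_eq_blockList_of_mem_sortedBlocks hb
  exact (mem_blockList hf).mp hz

theorem nodup_flatten_sortedBlocks_append_undefinedList :
    ((sortedBlocks e).flatten ++ undefinedList e).Nodup := by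
  rw [(sortedBlocks_perm.flatten.append_right _).nodup_iff]
  refine List.nodup_append.mpr ⟨List.nodup_flatten.mpr ⟨?_, ?_⟩, nodup_toList _, ?_⟩
  · simpa using fun f _ => nodup_blockList f
  · refine List.pairwise_map.mpr ((nodup_toList _).imp_of_mem fun hf hg hfg => ?_)
    rw [mem_toList] at hf hg
    refine List.disjoint_left.mpr fun z hzf hzg => hfg ?_
    rw [mem_blockList hf] at hzf
    rw [mem_blockList hg, hzf] at hzg
    exact Option.some.inj hzg
  · simp only [List.mem_flatten, List.mem_map, mem_toList]
    rintro a ⟨_, ⟨f, hf, rfl⟩, ha⟩ b hb rfl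
    rw [mem_blockList hf] at ha
    rw [mem_undefinedList, ha] at hb
    exact Option.some_ne_none _ hb

theorem mem_flatten_sortedBlocks_append_undefinedList
    (he : ∀ x y, e x = some y → e y = some y) (x : α) :
    x ∈ (sortedBlocks e).flatten ++ undefinedList e := by
  rw [(sortedBlocks_perm.flatten.append_right _).mem_iff]
  rcases hx : e x with _ | f
  · exact List.mem_append_right _ (mem_undefinedList.mpr hx)
  · have hf : f ∈ fixedPoints e := mem_fixedPoints.mpr (he x f hx)
    refine List.mem_append_left _ (List.mem_flatten.mpr ⟨blockList e f, ?_, ?_⟩)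
    · exact List.mem_map_of_mem (mem_toList.mpr hf)
    · exact (mem_blockList hf).mpr hx

end Idempotent

theorem apply_eq_some_of_pcomp_self_eq {n : ℕ} {e : Fin n → Option (Fin n)} (he : pcomp e e = e)
    {x y : Fin n} (hxy : e x = some y) : e y = some y := by
  simpa [pcomp, hxy] using congrFun he x

theorem idempotent_conjugate_to_standard (n : ℕ) (e : Fin n → Option (Fin n))
    (he : pcomp e e = e) :
    ∃ (σ : Equiv.Perm (Fin n)) (r : ℕ) (β : ℕ → ℕ) (m : ℕ),
      (∀ i < r, 1 ≤ β i) ∧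
      (∀ i j, i ≤ j → j < r → β j ≤ β i) ∧
      m + blockSum β r = n ∧
      (∀ i < r, ∀ x : Fin n, blockSum β i ≤ (x : ℕ) → (x : ℕ) < blockSum β (i + 1) →
        ∃ y : Fin n, (y : ℕ) = blockSum β i ∧ pconj σ e x = some y) ∧
      (∀ x : Fin n, blockSum β r ≤ (x : ℕ) → pconj σ e x = none) := by
  exact exists_perm_pconj_standard_of_blocks e (sortedBlocks e) (undefinedList e)
    nodup_flatten_sortedBlocks_append_undefinedList
    (mem_flatten_sortedBlocks_append_undefinedList fun _ _ => apply_eq_some_of_pcomp_self_eq he)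
    pairwise_sortedBlocks nil_notMem_sortedBlocks (fun _ => apply_eq_head?_of_mem_sortedBlocks)
    fun _ => mem_undefinedList.mp
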